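/- arXiv:2301.02730 — 2 statements merged into one kernel-verified Lean document; each statement's English description precedes it below -/
import Mathlib

section
/- Let A be a symmetric 5×5 real matrix and let e ∈ ℝ^5 be a unit vector. Then (tr A)·⟨Ae, e⟩ − ‖Ae‖² + ‖A‖_F² ≥ 0. -/
/-!
Let `P = I - e eᵀ` be the orthogonal projection onto `e⊥` and `C = P A P` the compression of `A`
to that hyperplane. Writing `H = tr A`, `a = ⟨Ae, e⟩`, `S = ‖Ae‖²` and `F = ‖A‖_F²`, one has
`tr C = H - a` and `‖C‖_F² = F - 2S + a²`. Since `C` lives on the `(n-1)`-dimensional space `e⊥`,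
Cauchy–Schwarz against `P` gives `(H - a)² ≤ (n - 1) ‖C‖_F²`. For `n ≤ 5` this yields
`4 (H a - S + F) ≥ (H + a)² + 4 (S - a²) ≥ 0`, the last step being Cauchy–Schwarz `a² ≤ S`.
-/

open Matrix

namespace Matrix

section Frobenius

variable {n : Type*} [Fintype n]

lemma trace_mul_transpose_eq_sum (X Y : Matrix n n ℝ) :
    trace (X * Yᵀ) = ∑ i, ∑ j, X i j * Y i j := by
  simp [trace, mul_apply]

lemma trace_mul_transpose_sq_le (X Y : Matrix n n ℝ) :
    trace (X * Yᵀ) ^ 2 ≤ trace (X * Xᵀ) * trace (Y * Yᵀ) := by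
  simp only [trace_mul_transpose_eq_sum, ← Fintype.sum_prod_type', ← sq]
  exact Finset.sum_mul_sq_le_sq_mul_sq _ _ _

lemma trace_mul_transpose_self_nonneg (X : Matrix n n ℝ) : 0 ≤ trace (X * Xᵀ) := by
  rw [trace_mul_transpose_eq_sum]
  exact Finset.sum_nonneg fun i _ => Finset.sum_nonneg fun j _ => mul_self_nonneg (X i j)

lemma dotProduct_sq_le (x y : n → ℝ) : (x ⬝ᵥ y) ^ 2 ≤ (x ⬝ᵥ x) * (y ⬝ᵥ y) := by
  simpa only [dotProduct, sq] using Finset.sum_mul_sq_le_sq_mul_sq Finset.univ x y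

lemma IsSymm.mulVec_dotProduct {A : Matrix n n ℝ} (hA : A.IsSymm) (x y : n → ℝ) :
    A *ᵥ x ⬝ᵥ y = x ⬝ᵥ A *ᵥ y := by
  rw [dotProduct_comm, dotProduct_mulVec, ← mulVec_transpose, hA.eq, dotProduct_comm]

end Frobenius

variable {n : Type*} [DecidableEq n]

def projOrthogonal (e : n → ℝ) : Matrix n n ℝ := 1 - vecMulVec e e

lemma transpose_projOrthogonal (e : n → ℝ) : (projOrthogonal e)ᵀ = projOrthogonal e := by
  simp [projOrthogonal]

variable [Fintype n] {e : n → ℝ}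

lemma projOrthogonal_mul_self (he : e ⬝ᵥ e = 1) :
    projOrthogonal e * projOrthogonal e = projOrthogonal e := by
  simp [projOrthogonal, sub_mul, mul_sub, vecMulVec_mul_vecMulVec, he]

lemma trace_projOrthogonal (he : e ⬝ᵥ e = 1) :
    trace (projOrthogonal e) = Fintype.card n - 1 := by
  simp [projOrthogonal, he]

lemma mul_projOrthogonal (A : Matrix n n ℝ) (e : n → ℝ) :
    A * projOrthogonal e = A - vecMulVec (A *ᵥ e) e := by
  rw [projOrthogonal, mul_sub, mul_one, mul_vecMulVec]

lemma trace_mul_projOrthogonal (A : Matrix n n ℝ) (e : n → ℝ) :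
    trace (A * projOrthogonal e) = trace A - A *ᵥ e ⬝ᵥ e := by
  rw [mul_projOrthogonal, trace_sub, trace_vecMulVec]

lemma trace_mul_projOrthogonal_sq {A : Matrix n n ℝ} (hA : A.IsSymm) (e : n → ℝ) :
    trace (A * projOrthogonal e * (A * projOrthogonal e)) =
      trace (A * A) - 2 * (A *ᵥ e ⬝ᵥ A *ᵥ e) + (A *ᵥ e ⬝ᵥ e) ^ 2 := by
  rw [mul_projOrthogonal]
  simp only [mul_sub, sub_mul, trace_sub, vecMulVec_mul_vecMulVec]
  rw [trace_mul_comm (vecMulVec _ _), mul_vecMulVec]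
  simp only [trace_vecMulVec, dotProduct_smul, smul_eq_mul, hA.mulVec_dotProduct (A *ᵥ e),
    dotProduct_comm e (A *ᵥ e)]
  ring

def compression (e : n → ℝ) (A : Matrix n n ℝ) : Matrix n n ℝ :=
  projOrthogonal e * A * projOrthogonal e

lemma trace_compression_mul_projOrthogonal (A : Matrix n n ℝ) (he : e ⬝ᵥ e = 1) :
    trace (compression e A * (projOrthogonal e)ᵀ) = trace A - A *ᵥ e ⬝ᵥ e := by
  rw [compression, transpose_projOrthogonal, Matrix.mul_assoc, projOrthogonal_mul_self he,
    trace_mul_cycle, projOrthogonal_mul_self he, trace_mul_comm, trace_mul_projOrthogonal]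

lemma trace_compression_mul_transpose {A : Matrix n n ℝ} (hA : A.IsSymm) (he : e ⬝ᵥ e = 1) :
    trace (compression e A * (compression e A)ᵀ) =
      trace (A * Aᵀ) - 2 * (A *ᵥ e ⬝ᵥ A *ᵥ e) + (A *ᵥ e ⬝ᵥ e) ^ 2 := by
  rw [compression]
  set P := projOrthogonal e
  have hP : P * P = P := projOrthogonal_mul_self he
  have hC : (P * A * P)ᵀ = P * A * P := by
    rw [transpose_mul, transpose_mul, transpose_projOrthogonal, hA.eq, Matrix.mul_assoc]
  have hCC : P * A * P * (P * A * P) = P * (A * P * (A * P)) := by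
    have hP' : ∀ X, P * (P * X) = P * X := fun X => by rw [← Matrix.mul_assoc, hP]
    simp only [Matrix.mul_assoc, hP']
  rw [hC, hCC, trace_mul_comm, Matrix.mul_assoc (A * P), Matrix.mul_assoc A P P, hP, hA.eq,
    ← trace_mul_projOrthogonal_sq hA]

lemma sq_trace_sub_le {A : Matrix n n ℝ} (hA : A.IsSymm) (he : e ⬝ᵥ e = 1) :
    (trace A - A *ᵥ e ⬝ᵥ e) ^ 2 ≤
      (Fintype.card n - 1) * (trace (A * Aᵀ) - 2 * (A *ᵥ e ⬝ᵥ A *ᵥ e) + (A *ᵥ e ⬝ᵥ e) ^ 2) := by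
  have h := trace_mul_transpose_sq_le (compression e A) (projOrthogonal e)
  rwa [trace_compression_mul_projOrthogonal A he, trace_compression_mul_transpose hA he,
    transpose_projOrthogonal, projOrthogonal_mul_self he, trace_projOrthogonal he, mul_comm] at h

theorem trace_mul_sub_add_nonneg_of_card_le_five {A : Matrix n n ℝ} (hA : A.IsSymm)
    (he : e ⬝ᵥ e = 1) (hn : Fintype.card n ≤ 5) :
    0 ≤ trace A * (A *ᵥ e ⬝ᵥ e) - A *ᵥ e ⬝ᵥ A *ᵥ e + trace (A * Aᵀ) := by
  have htrace_sq := sq_trace_sub_le hA he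
  have hfrob_nonneg : 0 ≤ trace (A * Aᵀ) - 2 * (A *ᵥ e ⬝ᵥ A *ᵥ e) + (A *ᵥ e ⬝ᵥ e) ^ 2 := by
    rw [← trace_compression_mul_transpose hA he]
    exact trace_mul_transpose_self_nonneg _
  have hcard : (Fintype.card n : ℝ) - 1 ≤ 4 := by
    have : (Fintype.card n : ℝ) ≤ 5 := by exact_mod_cast hn
    linarith
  have hCS := dotProduct_sq_le (A *ᵥ e) e
  rw [he, mul_one] at hCS
  linarith [mul_le_mul_of_nonneg_right hcard hfrob_nonneg, sq_nonneg (trace A + A *ᵥ e ⬝ᵥ e)]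

end Matrix

/-- For a symmetric `5 × 5` real matrix `A` and a unit vector `e ∈ ℝ^5`,
`(tr A)⟨Ae, e⟩ − ‖Ae‖² + ‖A‖_F² ≥ 0`. -/
theorem stmt_1 (A : Matrix (Fin 5) (Fin 5) ℝ) (hA : A.IsSymm)
    (e : Fin 5 → ℝ) (he : ∑ i, e i ^ 2 = 1) :
    A.trace * (∑ i, A.mulVec e i * e i) - (∑ i, (A.mulVec e i) ^ 2)
        + (∑ i, ∑ j, (A i j) ^ 2) ≥ 0 := by
  have he' : e ⬝ᵥ e = 1 := by simpa only [dotProduct, sq] using he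
  have h := trace_mul_sub_add_nonneg_of_card_le_five hA he' (by simp)
  simpa only [trace_mul_transpose_eq_sum, dotProduct, ← sq] using h
end

section
/- Let λ > 0 and 0 < β < 1/2 be real numbers. Define u, f, h : ℝ → ℝ by u(r) := exp(λr²/(2√(1−2β))), f(r) := exp(−(1/4)(1/√(1−2β) + 1)(λ/β)r²), h(r) := −(λ/β)r, and set v := u^{1/β}. Then for all r ∈ ℝ: (i) 2f'(r)/f(r) = h(r) − v'(r)/v(r); (ii) (1/2 − β)·v'(r)² = ((1/2)h(r)² + λ/β − |h'(r)|)·v(r)²; (iii) u''(r) + 2(f'(r)/f(r))u'(r) + 2β(f''(r)/f(r))u(r) + λu(r) = 0. -/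
lemma expsq_hasDerivAt (c r : ℝ) :
    HasDerivAt (fun x => Real.exp (c * x ^ 2)) (Real.exp (c * r ^ 2) * (c * (2 * r))) r := by
  have h1 : HasDerivAt (fun x : ℝ => c * x ^ 2) (c * (2 * r)) r := by
    simpa using (hasDerivAt_pow 2 r).const_mul c
  exact h1.exp

lemma deriv_expsq (c : ℝ) :
    deriv (fun x => Real.exp (c * x ^ 2)) = fun r => Real.exp (c * r ^ 2) * (c * (2 * r)) := by
  funext r; exact (expsq_hasDerivAt c r).deriv

lemma deriv2_expsq (c r : ℝ) :
    deriv (deriv (fun x => Real.exp (c * x ^ 2))) r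
      = Real.exp (c * r ^ 2) * (c * (2 * r)) * (c * (2 * r)) + Real.exp (c * r ^ 2) * (c * 2) := by
  rw [deriv_expsq]
  have h2 : HasDerivAt (fun x : ℝ => c * (2 * x)) (c * 2) r := by
    simpa [mul_assoc] using (hasDerivAt_id r).const_mul (c * 2)
  exact ((expsq_hasDerivAt c r).mul h2).deriv

/-- the explicit solution for the three-dimensional case (`n = 3`,
`β < 1/2`): with `u(r) = exp(λr²/(2√(1−2β)))`, `f(r) = exp(−(1/4)(1/√(1−2β)+1)(λ/β)r²)`,
`h(r) = −(λ/β)r`, `v = u^{1/β}`, the identities (i)–(iii) hold. -/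
theorem stmt_12 (lam β : ℝ) (hlam : 0 < lam) (hβ0 : 0 < β) (hβ : β < 1 / 2)
    (u f h v : ℝ → ℝ)
    (hu : u = fun r => Real.exp (lam * r ^ 2 / (2 * Real.sqrt (1 - 2 * β))))
    (hf : f = fun r =>
      Real.exp (-(1 / 4) * (1 / Real.sqrt (1 - 2 * β) + 1) * (lam / β) * r ^ 2))
    (hh : h = fun r => -(lam / β) * r)
    (hv : v = fun r => u r ^ (1 / β)) :
    ∀ r : ℝ,
      2 * deriv f r / f r = h r - deriv v r / v r ∧
      (1 / 2 - β) * (deriv v r) ^ 2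
        = ((1 / 2) * h r ^ 2 + lam / β - |deriv h r|) * (v r) ^ 2 ∧
      deriv (deriv u) r + 2 * (deriv f r / f r) * deriv u r
        + 2 * β * (deriv (deriv f) r / f r) * u r + lam * u r = 0 := by
  set s := Real.sqrt (1 - 2 * β) with hsdef
  have hpos : (0:ℝ) < 1 - 2 * β := by linarith
  have hs0 : 0 < s := Real.sqrt_pos.mpr hpos
  have hs2 : s ^ 2 = 1 - 2 * β := Real.sq_sqrt hpos.le
  have hsne : s ≠ 0 := ne_of_gt hs0
  have hβne : β ≠ 0 := ne_of_gt hβ0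
  have hU : u = fun r => Real.exp (lam / (2 * s) * r ^ 2) := by
    rw [hu]; funext r; congr 1; ring
  have hF : f = fun r => Real.exp (-(1 / 4) * (1 / s + 1) * (lam / β) * r ^ 2) := by
    rw [hf]
  have hV : v = fun r => Real.exp (lam / (2 * s * β) * r ^ 2) := by
    rw [hv, hU]; funext r
    rw [← Real.exp_mul]; congr 1; ring
  have hdh : deriv (fun r : ℝ => -(lam / β) * r) = fun _ => -(lam / β) := by
    funext r
    simpa [mul_comm] using (((hasDerivAt_id r).const_mul (-(lam / β)))).deriv
  intro r
  rw [hU, hF, hV, hh]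
  rw [hdh, deriv2_expsq, deriv2_expsq, deriv_expsq, deriv_expsq, deriv_expsq]
  beta_reduce
  have habs : |(-(lam / β))| = lam / β := by
    rw [abs_neg, abs_of_pos (div_pos hlam hβ0)]
  rw [habs]
  have e1 := Real.exp_ne_zero (-(1 / 4) * (1 / s + 1) * (lam / β) * r ^ 2)
  have e2 := Real.exp_ne_zero (lam / (2 * s * β) * r ^ 2)
  have e3 := Real.exp_ne_zero (lam / (2 * s) * r ^ 2)
  set E1 := Real.exp (-(1 / 4) * (1 / s + 1) * (lam / β) * r ^ 2) with hE1
  set E2 := Real.exp (lam / (2 * s * β) * r ^ 2) with hE2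
  set E3 := Real.exp (lam / (2 * s) * r ^ 2) with hE3
  refine ⟨?_, ?_, ?_⟩
  · field_simp
    ring_nf
  · field_simp
    linear_combination (-(lam * r ^ 2)) * hs2
  · field_simp
    linear_combination (8 * E3 * lam ^ 2 * r ^ 2) * hs2
end
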